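/- Define B(2n) = Σ_{k=0}^{n−1} ([n choose k]_2)^2 · 2^{(n−k)^2} · (2^k)! · 2^{(2n−2k+1)·2^k} · ∏_{i=0}^{n−k−1} (2^{n−k} − 2^i)^{2^k}. Then (2^n − 1)^2 · 2^{3·2^{n−1}+1} · (2^{n−1})! ≤ B(2n) for all n ≥ 1, and B(2n) < 2^{3·2^{n−1}+2n+1} · (2^{n−1})! for all n ≥ 7. -/

import Mathlib

/-!
All summands of `B(2n)` are nonnegative, and the summand `k = n - 1` is exactly the lower bound.
For the upper bound, each factor of `[n choose k]_2` is at most `2^(n-k+1)` and each factor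
`2^(n-k) - 2^i` at most `2^(n-k)`, so every summand with `k ≤ n - 2` is at most
`2^(3·2^(n-1)+2) · (2^(n-1))!`; this uses `a^a · a! ≤ (2a)!` with `a = 2^(n-2)` to absorb the
exponent `(n-2)·2^(n-2)`, and an exponent comparison valid for `n ≥ 7`. The `n - 1 ≤ 2^(n-1)`
small summands together with the top summand `(2^n - 1)^2 · 2^(3·2^(n-1)+1) · (2^(n-1))!` then
stay below the bound since `y + (y - 1)^2 < y^2` for `y = 2^n`.
-/

/-- The Gaussian binomial coefficient `[n choose k]_2`. -/
def gb (n k : ℕ) : ℚ := ∏ i ∈ Finset.range k, (((2:ℚ)^n - 2^i) / ((2:ℚ)^k - 2^i))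

/-- `B(2n) = Σ_{k=0}^{n−1} ([n choose k]_2)^2 · 2^{(n−k)^2} · (2^k)! ·
    2^{(2n−2k+1)·2^k} · ∏_{i=0}^{n−k−1} (2^{n−k} − 2^i)^{2^k}`. -/
def Bfun (n : ℕ) : ℚ :=
  ∑ k ∈ Finset.range n,
    (gb n k)^2 * 2^((n-k)^2) * (2^k).factorial * 2^((2*n-2*k+1)*2^k) *
      ∏ i ∈ Finset.range (n-k), ((2:ℚ)^(n-k) - 2^i)^(2^k)

open Finset
open scoped Nat

def bTerm (n k : ℕ) : ℚ :=
  (gb n k)^2 * 2^((n-k)^2) * (2^k)! * 2^((2*n-2*k+1)*2^k) *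
    ∏ i ∈ range (n-k), ((2:ℚ)^(n-k) - 2^i)^(2^k)

lemma Bfun_eq_sum_bTerm (n : ℕ) : Bfun n = ∑ k ∈ range n, bTerm n k := rfl

lemma two_pow_sub_two_pow_pos {i k : ℕ} (h : i < k) : (0:ℚ) < 2^k - 2^i :=
  sub_pos.2 (pow_lt_pow_right₀ one_lt_two h)

lemma two_pow_sub_two_pow_nonneg {i k : ℕ} (h : i ≤ k) : (0:ℚ) ≤ 2^k - 2^i :=
  sub_nonneg.2 (pow_le_pow_right₀ one_le_two h)

lemma gb_factor_nonneg {n k i : ℕ} (hk : k ≤ n) (hi : i ∈ range k) :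
    0 ≤ ((2:ℚ)^n - 2^i) / (2^k - 2^i) := by
  have hik := mem_range.1 hi
  exact div_nonneg (two_pow_sub_two_pow_nonneg (by omega)) (two_pow_sub_two_pow_pos hik).le

lemma gb_nonneg {n k : ℕ} (hk : k ≤ n) : 0 ≤ gb n k :=
  prod_nonneg fun _ hi ↦ gb_factor_nonneg hk hi

lemma gb_factor_le {n k i : ℕ} (hk : k ≤ n) (hik : i < k) :
    ((2:ℚ)^n - 2^i) / (2^k - 2^i) ≤ 2^(n-k+1) := by
  have hden : (2:ℚ)^(k-1) ≤ 2^k - 2^i := by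
    have h1 : (2:ℚ)^i ≤ 2^(k-1) := pow_le_pow_right₀ one_le_two (by omega)
    have h2 : (2:ℚ)^k = 2 * 2^(k-1) := by rw [← pow_succ']; congr 1; omega
    linarith
  have hnum : (2:ℚ)^(n-k+1) * 2^(k-1) = 2^n := by rw [← pow_add]; congr 1; omega
  rw [div_le_iff₀ (two_pow_sub_two_pow_pos hik)]
  calc (2:ℚ)^n - 2^i ≤ 2^n := by linarith [pow_pos (two_pos (α := ℚ)) i]
    _ = 2^(n-k+1) * 2^(k-1) := hnum.symm
    _ ≤ 2^(n-k+1) * (2^k - 2^i) := by gcongr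

lemma gb_le_two_pow {n k : ℕ} (hk : k ≤ n) : gb n k ≤ 2^(k*(n-k+1)) :=
  calc gb n k ≤ ∏ _i ∈ range k, (2:ℚ)^(n-k+1) :=
        prod_le_prod (fun _ hi ↦ gb_factor_nonneg hk hi) fun i hi ↦ gb_factor_le hk (mem_range.1 hi)
    _ = 2^(k*(n-k+1)) := by rw [prod_const, card_range, ← pow_mul, mul_comm]

lemma prod_two_pow_sub_two_pow_eq (m : ℕ) :
    ∏ i ∈ range m, ((2:ℚ)^(m+1) - 2^i) = (2^(m+1) - 1) * ∏ i ∈ range m, ((2:ℚ)^m - 2^i) := by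
  -- expand `∏_{i ≤ m} (2^(m+1) - 2^i)` by splitting off `i = m` and, alternatively, `i = 0`
  have hlast := prod_range_succ (fun i ↦ (2:ℚ)^(m+1) - 2^i) m
  have hfirst := prod_range_succ' (fun i ↦ (2:ℚ)^(m+1) - 2^i) m
  have hshift : ∀ i, (2:ℚ)^(m+1) - 2^(i+1) = 2 * (2^m - 2^i) := fun i ↦ by ring
  simp only [hshift, prod_mul_distrib, prod_const, card_range, pow_zero] at hfirst
  have hm : (2:ℚ)^(m+1) - 2^m = 2^m := by ring
  rw [hm, hfirst] at hlast
  exact mul_right_cancel₀ (pow_ne_zero m two_ne_zero) (by linarith)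

lemma gb_succ_self (m : ℕ) : gb (m+1) m = 2^(m+1) - 1 := by
  have hne : ∏ i ∈ range m, ((2:ℚ)^m - 2^i) ≠ 0 :=
    prod_ne_zero_iff.2 fun _ hi ↦ (two_pow_sub_two_pow_pos (mem_range.1 hi)).ne'
  rw [gb, prod_div_distrib, prod_two_pow_sub_two_pow_eq, mul_div_assoc, div_self hne, mul_one]

lemma prod_pow_two_pow_sub_two_pow_nonneg (m e : ℕ) :
    0 ≤ ∏ i ∈ range m, ((2:ℚ)^m - 2^i)^e :=
  prod_nonneg fun _ hi ↦ pow_nonneg (two_pow_sub_two_pow_nonneg (mem_range.1 hi).le) _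

lemma prod_pow_two_pow_sub_two_pow_le (m e : ℕ) :
    ∏ i ∈ range m, ((2:ℚ)^m - 2^i)^e ≤ 2^(m*e*m) :=
  calc ∏ i ∈ range m, ((2:ℚ)^m - 2^i)^e ≤ ∏ _i ∈ range m, ((2:ℚ)^m)^e :=
        prod_le_prod (fun _ hi ↦ pow_nonneg (two_pow_sub_two_pow_nonneg (mem_range.1 hi).le) _)
          fun _ hi ↦ pow_le_pow_left₀ (two_pow_sub_two_pow_nonneg (mem_range.1 hi).le)
            (sub_le_self _ (by positivity)) _
    _ = 2^(m*e*m) := by rw [prod_const, card_range, ← pow_mul, ← pow_mul, mul_assoc]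

lemma bTerm_nonneg (n k : ℕ) : 0 ≤ bTerm n k := by
  have := prod_pow_two_pow_sub_two_pow_nonneg (n-k) (2^k)
  unfold bTerm
  positivity

lemma bTerm_succ_self (m : ℕ) :
    bTerm (m+1) m = ((2:ℚ)^(m+1) - 1)^2 * 2^(3*2^m+1) * (2^m)! := by
  have h1 : m + 1 - m = 1 := by omega
  have h3 : 2*(m+1) - 2*m + 1 = 3 := by omega
  rw [bTerm, gb_succ_self, h1, h3, prod_range_one]
  norm_num
  ring

lemma pow_self_mul_factorial_le_factorial_two_mul (a : ℕ) : a^a * a ! ≤ (2*a)! :=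
  calc a^a * a ! ≤ a ! * (a+1)^a := by rw [mul_comm]; gcongr; omega
    _ ≤ (2*a)! := two_mul a ▸ Nat.factorial_mul_pow_le_factorial

lemma four_mul_succ_sq_le (m : ℕ) (hm : 2 ≤ m) : 4*(m+1)^2 ≤ 9*2^m := by
  induction m, hm using Nat.le_induction with
  | base => norm_num
  | succ m hm ih =>
    have h2 : 2^(m+1) = 2 * 2^m := by ring
    nlinarith

lemma sq_add_le_mul_two_pow (j : ℕ) (hj : 5 ≤ j) : (j+2)^2 + 2*(j+2) + 3*2^j ≤ 2 + j*2^j := by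
  induction j, hj using Nat.le_induction with
  | base => norm_num
  | succ j hj ih =>
    have h32 : 32 ≤ 2^j := le_trans (by norm_num) (Nat.pow_le_pow_right two_pos hj)
    have h2 : 2^(j+1) = 2 * 2^j := by ring
    nlinarith

lemma bTerm_exponent_le (j k m : ℕ) (hj : 5 ≤ j) (hm : 2 ≤ m) (hkm : k + m = j + 2) :
    2*(k*(m+1)) + m^2 + (2*m+1)*2^k + m*2^k*m ≤ 3*2^(j+1) + 2 + j*2^j := by
  have hpow : (m+1)^2 * 2^k ≤ 9*2^j := by
    have h4 : 2^m * 2^k = 4 * 2^j := by rw [← pow_add, add_comm m k, hkm]; ring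
    nlinarith [Nat.mul_le_mul_right (2^k) (four_mul_succ_sq_le m hm)]
  have hsq : 2*(k*(m+1)) + m^2 ≤ (j+2)^2 + 2*(j+2) := by rw [← hkm]; nlinarith
  have h2 : 2^(j+1) = 2 * 2^j := by ring
  nlinarith [sq_add_le_mul_two_pow j hj]

lemma bTerm_le_two_pow_mul_factorial (j k : ℕ) (hj : 5 ≤ j) (hk : k ≤ j) :
    bTerm (j+2) k ≤ 2^(3*2^(j+1)+2) * ((2^(j+1))! : ℚ) := by
  obtain ⟨m, hm, hkm⟩ : ∃ m, 2 ≤ m ∧ k + m = j + 2 := ⟨j + 2 - k, by omega, by omega⟩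
  have hnk : j + 2 - k = m := by omega
  have htwo : 2*(j+2) - 2*k + 1 = 2*m + 1 := by omega
  have hgb : gb (j+2) k ^ 2 ≤ (2:ℚ)^(2*(k*(m+1))) := by
    rw [mul_comm 2, pow_mul, ← hnk]
    exact pow_le_pow_left₀ (gb_nonneg (by omega)) (gb_le_two_pow (by omega)) 2
  have hfac : ((2^k)! : ℚ) ≤ (2^j)! := by
    exact_mod_cast Nat.factorial_le (Nat.pow_le_pow_right two_pos hk)
  have habsorb : (2:ℚ)^(j*2^j) * (2^j)! ≤ (2^(j+1))! := by
    have := pow_self_mul_factorial_le_factorial_two_mul (2^j)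
    rw [← pow_mul, ← _root_.pow_succ'] at this
    exact_mod_cast this
  calc bTerm (j+2) k
      ≤ 2^(2*(k*(m+1))) * 2^(m^2) * (2^j)! * 2^((2*m+1)*2^k) * 2^(m*2^k*m) := by
        rw [bTerm, hnk, htwo]
        gcongr
        · exact prod_pow_two_pow_sub_two_pow_nonneg m _
        · exact prod_pow_two_pow_sub_two_pow_le m _
    _ = 2^(2*(k*(m+1)) + m^2 + (2*m+1)*2^k + m*2^k*m) * (2^j)! := by ring
    _ ≤ 2^(3*2^(j+1) + 2 + j*2^j) * (2^j)! := by
        gcongr ?_ * _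
        exact pow_le_pow_right₀ one_le_two (bTerm_exponent_le j k m hj hm hkm)
    _ = 2^(3*2^(j+1)+2) * (2^(j*2^j) * (2^j)!) := by rw [pow_add]; ring
    _ ≤ 2^(3*2^(j+1)+2) * (2^(j+1))! := by gcongr

lemma Bfun_ge (m : ℕ) : ((2:ℚ)^(m+1) - 1)^2 * 2^(3*2^m+1) * (2^m)! ≤ Bfun (m+1) := by
  rw [Bfun_eq_sum_bTerm, ← bTerm_succ_self]
  exact single_le_sum (fun k _ ↦ bTerm_nonneg _ k) (self_mem_range_succ m)

lemma Bfun_lt (j : ℕ) (hj : 5 ≤ j) :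
    Bfun (j+2) < 2^(3*2^(j+1)+2*(j+2)+1) * (2^(j+1))! := by
  set C : ℚ := 2^(3*2^(j+1)+1) * (2^(j+1))!
  have hC : 0 < C := by positivity
  have hsmall : ∑ k ∈ range (j+1), bTerm (j+2) k ≤ 2^(j+2) * C := by
    calc ∑ k ∈ range (j+1), bTerm (j+2) k ≤ ∑ _k ∈ range (j+1), 2 * C :=
          sum_le_sum fun k hk ↦ (bTerm_le_two_pow_mul_factorial j k hj
            (Nat.lt_succ_iff.1 (mem_range.1 hk))).trans_eq (by simp only [C]; ring)
      _ = (j+1 : ℕ) * (2 * C) := by rw [sum_const, card_range, nsmul_eq_mul]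
      _ ≤ 2^(j+1) * (2 * C) := by gcongr; exact_mod_cast Nat.lt_two_pow_self.le
      _ = 2^(j+2) * C := by ring
  have hy : (2:ℚ) ≤ 2^(j+2) := le_self_pow₀ one_le_two (by omega)
  calc Bfun (j+2) = ∑ k ∈ range (j+1), bTerm (j+2) k + ((2:ℚ)^(j+2) - 1)^2 * C := by
        rw [Bfun_eq_sum_bTerm, sum_range_succ, bTerm_succ_self]; ring
    _ ≤ (2^(j+2) + ((2:ℚ)^(j+2) - 1)^2) * C := by nlinarith
    _ < (2^(j+2))^2 * C := by gcongr; nlinarith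
    _ = 2^(3*2^(j+1)+2*(j+2)+1) * (2^(j+1))! := by simp only [C]; ring

theorem stmt_13 (n : ℕ) :
    (1 ≤ n → ((2:ℚ)^n - 1)^2 * 2^(3*2^(n-1)+1) * (2^(n-1)).factorial ≤ Bfun n) ∧
    (7 ≤ n → Bfun n < 2^(3*2^(n-1)+2*n+1) * (2^(n-1)).factorial) := by
  constructor
  · intro hn
    obtain ⟨m, rfl⟩ : ∃ m, n = m + 1 := ⟨n - 1, by omega⟩
    simpa using Bfun_ge m
  · intro hn
    obtain ⟨j, rfl⟩ : ∃ j, n = j + 2 := ⟨n - 2, by omega⟩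
    simpa using Bfun_lt j (by omega)
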